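/- arXiv:2204.04047 — 2 statements merged into one kernel-verified Lean document; each statement's English description precedes it below -/
import Mathlib

section
/- Let μ_σ and μ_ε be nonzero positive finite Borel measures on [0,1] satisfying the thermodynamical restriction (T). Then for every s ∈ ℂ with Re s > 0: Φ_σ(s) ≠ 0, Φ_ε(s) ≠ 0, the number s²·Φ_σ(s)/Φ_ε(s) does not lie in the half-line (−∞,0] ⊂ ℝ, and consequently s² + ξ²·Φ_ε(s)/Φ_σ(s) ≠ 0 for every ξ ∈ ℝ. -/
open MeasureTheory Complex Set

/-- `Phi μ s = ∫₀¹ s^α dμ(α)`, with the principal branch of the complex power. -/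
noncomputable def Phi (μ : Measure ℝ) (s : ℂ) : ℂ :=
  ∫ α in Set.Icc (0:ℝ) 1, s ^ (α : ℂ) ∂μ

/-- The thermodynamical restriction (T). -/
def TDrestriction (μσ με : Measure ℝ) : Prop :=
  ∀ E : Set (ℝ × ℝ), MeasurableSet E →
    E ⊆ {p : ℝ × ℝ | p.2 < p.1 ∧ p.1 ∈ Set.Icc (0:ℝ) 1 ∧ p.2 ∈ Set.Icc (0:ℝ) 1} →
    (μσ.prod με) E ≤ (με.prod μσ) E

/-!
For `Re s > 0` and `α ∈ [0, 1]` the power `s ^ α` has positive real part, so `Re Φ > 0`.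
By conjugation symmetry we may assume `Im s ≥ 0`; then both `Φ`'s lie in the closed first
quadrant, and `Im (Φ_ε · conj Φ_σ)` is the integral against `μ_ε × μ_σ` of the kernel
`Im (s ^ α · conj (s ^ β)) = |s| ^ (α + β) · sin ((α - β) arg s)`. This kernel is antisymmetric
and nonnegative for `α > β`, so (T) makes the integral nonnegative. Hence `Φ_σ / Φ_ε` has
positive real part and nonpositive imaginary part, and multiplying it by `s²`, whose argument
lies in `[0, π)`, cannot land on `(-∞, 0]`.
-/

open scoped ComplexConjugate

lemma integral_prod_nonneg_of_antisymm {μ ν : Measure ℝ} [SFinite μ] [SFinite ν] {F : ℝ × ℝ → ℝ}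
    (hF : Integrable F (μ.prod ν)) (hanti : ∀ p, F p.swap = -F p)
    (hle : (ν.prod μ).restrict {p | p.2 < p.1} ≤ (μ.prod ν).restrict {p | p.2 < p.1})
    (hpos : ∀ᵐ p ∂(μ.prod ν), p.2 < p.1 → 0 ≤ F p) :
    0 ≤ ∫ p, F p ∂(μ.prod ν) := by
  set S : Set (ℝ × ℝ) := {p | p.2 < p.1}
  have hS : MeasurableSet S := measurableSet_lt measurable_snd measurable_fst
  -- `F = G - G ∘ swap` with `G = 1_S F`, so `∫ F d(μ × ν) = ∫_S F d(μ × ν) - ∫_S F d(ν × μ)`.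
  have hsplit : ∀ p, F p = S.indicator F p - S.indicator F p.swap := by
    intro p
    rcases lt_trichotomy p.2 p.1 with h | h | h
    · simp [S, h, h.not_gt]
    · have hdiag : F p = 0 := by
        have := hanti p
        rw [show p.swap = p from Prod.ext h h.symm] at this
        linarith
      simp [S, h, hdiag]
    · simp [S, h, h.not_gt, hanti]
  have hF' : Integrable F (ν.prod μ) :=
    hF.swap.neg.congr (ae_of_all _ fun p => by simp [hanti])
  have hswap : Integrable (fun p => S.indicator F p.swap) (μ.prod ν) := (hF'.indicator hS).swap
  rw [integral_congr_ae (ae_of_all _ hsplit), integral_sub (hF.indicator hS) hswap,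
    integral_prod_swap (S.indicator F), integral_indicator hS, integral_indicator hS, sub_nonneg]
  exact integral_mono_measure hle ((ae_restrict_iff' hS).2 hpos) hF.integrableOn

section cpow

variable {s : ℂ} {α β : ℝ}

lemma re_cpow_ofReal_pos (hs : 0 < s.re) (hα : |α| ≤ 1) : 0 < (s ^ (α : ℂ)).re := by
  have hs0 : s ≠ 0 := by rintro rfl; simp at hs
  have harg : |s.arg * α| < Real.pi / 2 := by
    rw [abs_mul]
    calc |s.arg| * |α| ≤ |s.arg| := mul_le_of_le_one_right (abs_nonneg _) hα
      _ < Real.pi / 2 := abs_arg_lt_pi_div_two_iff.2 (Or.inl hs)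
  rw [cpow_ofReal_re]
  exact mul_pos (Real.rpow_pos_of_pos (norm_pos_iff.2 hs0) _)
    (Real.cos_pos_of_mem_Ioo ⟨by linarith [neg_abs_le (s.arg * α)], (le_abs_self _).trans_lt harg⟩)

lemma im_cpow_ofReal_nonneg (him : 0 ≤ s.im) (hα : α ∈ Icc (0 : ℝ) 1) :
    0 ≤ (s ^ (α : ℂ)).im := by
  rw [cpow_ofReal_im]
  refine mul_nonneg (Real.rpow_nonneg (norm_nonneg s) _)
    (Real.sin_nonneg_of_nonneg_of_le_pi (mul_nonneg (arg_nonneg_iff.2 him) hα.1) ?_)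
  exact (mul_le_of_le_one_right (arg_nonneg_iff.2 him) hα.2).trans (arg_le_pi s)

lemma im_cpow_mul_conj_cpow_nonneg (him : 0 ≤ s.im) (hβα : β ≤ α) (hαβ : α ≤ β + 1) :
    0 ≤ (s ^ (α : ℂ) * conj (s ^ (β : ℂ))).im := by
  have harg := arg_nonneg_iff.2 him
  have hsin : 0 ≤ Real.sin (s.arg * α - s.arg * β) := by
    rw [← mul_sub]
    refine Real.sin_nonneg_of_nonneg_of_le_pi (mul_nonneg harg (by linarith)) ?_
    exact (mul_le_of_le_one_right harg (by linarith)).trans (arg_le_pi s)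
  have key : (s ^ (α : ℂ) * conj (s ^ (β : ℂ))).im =
      ‖s‖ ^ α * ‖s‖ ^ β * Real.sin (s.arg * α - s.arg * β) := by
    simp only [mul_im, conj_re, conj_im, cpow_ofReal_re, cpow_ofReal_im, Real.sin_sub]
    ring
  rw [key]
  exact mul_nonneg (mul_nonneg (by positivity) (by positivity)) hsin

end cpow

section Phi

variable {μ : Measure ℝ} {s : ℂ}

lemma integrableOn_cpow_ofReal [IsFiniteMeasure μ] (hs : s ≠ 0) :
    IntegrableOn (fun α : ℝ => s ^ (α : ℂ)) (Icc 0 1) μ :=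
  (continuous_ofReal.const_cpow (Or.inl hs)).continuousOn.integrableOn_compact isCompact_Icc

lemma re_Phi [IsFiniteMeasure μ] (hs : s ≠ 0) :
    (Phi μ s).re = ∫ α in Icc (0 : ℝ) 1, (s ^ (α : ℂ)).re ∂μ :=
  (integral_re (integrableOn_cpow_ofReal hs)).symm

lemma im_Phi [IsFiniteMeasure μ] (hs : s ≠ 0) :
    (Phi μ s).im = ∫ α in Icc (0 : ℝ) 1, (s ^ (α : ℂ)).im ∂μ :=
  (integral_im (integrableOn_cpow_ofReal hs)).symm

lemma re_Phi_pos [IsFiniteMeasure μ] (hμ : μ ≠ 0) (hsupp : μ (Icc (0 : ℝ) 1)ᶜ = 0)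
    (hs : 0 < s.re) : 0 < (Phi μ s).re := by
  have hs0 : s ≠ 0 := by rintro rfl; simp at hs
  have hpos : ∀ α ∈ Icc (0 : ℝ) 1, 0 < (s ^ (α : ℂ)).re := fun α hα =>
    re_cpow_ofReal_pos hs (abs_le.2 ⟨by linarith [hα.1], hα.2⟩)
  have hI : 0 < μ (Icc 0 1) := by
    rw [measure_congr (ae_eq_univ.2 hsupp)]
    exact Measure.measure_univ_pos.2 hμ
  rw [re_Phi hs0, setIntegral_pos_iff_support_of_nonneg_ae
    ((ae_restrict_iff' measurableSet_Icc).2 (ae_of_all _ fun α hα => (hpos α hα).le))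
    (integrableOn_cpow_ofReal hs0).re]
  exact hI.trans_le (measure_mono fun α hα => ⟨(hpos α hα).ne', hα⟩)

lemma im_Phi_nonneg [IsFiniteMeasure μ] (hs : s ≠ 0) (him : 0 ≤ s.im) : 0 ≤ (Phi μ s).im := by
  rw [im_Phi hs]
  exact setIntegral_nonneg measurableSet_Icc fun α hα => im_cpow_ofReal_nonneg him hα

lemma Phi_conj (hs : s.arg ≠ Real.pi) : Phi μ (conj s) = conj (Phi μ s) := by
  simp only [Phi, ← integral_conj, conj_cpow _ _ hs, conj_ofReal]

end Phi

lemma TDrestriction.restrict_prod_le {μσ με : Measure ℝ} [SFinite μσ] [SFinite με]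
    (hT : TDrestriction μσ με) :
    ((μσ.restrict (Icc 0 1)).prod (με.restrict (Icc 0 1))).restrict {p | p.2 < p.1} ≤
      ((με.restrict (Icc 0 1)).prod (μσ.restrict (Icc 0 1))).restrict {p | p.2 < p.1} := by
  have hS : MeasurableSet {p : ℝ × ℝ | p.2 < p.1} :=
    measurableSet_lt measurable_snd measurable_fst
  have hI : MeasurableSet (Icc (0 : ℝ) 1 ×ˢ Icc (0 : ℝ) 1) :=
    measurableSet_Icc.prod measurableSet_Icc
  rw [Measure.prod_restrict, Measure.prod_restrict, Measure.restrict_restrict hS,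
    Measure.restrict_restrict hS, Measure.le_iff]
  intro E hE
  rw [Measure.restrict_apply hE, Measure.restrict_apply hE]
  exact hT _ (hE.inter (hS.inter hI)) fun p hp => ⟨hp.2.1, hp.2.2.1, hp.2.2.2⟩

lemma im_Phi_mul_conj_Phi_nonneg {μσ με : Measure ℝ} [IsFiniteMeasure μσ] [IsFiniteMeasure με]
    (hT : TDrestriction μσ με) {s : ℂ} (hs : s ≠ 0) (him : 0 ≤ s.im) :
    0 ≤ (Phi με s * conj (Phi μσ s)).im := by
  have hint : Integrable (fun p : ℝ × ℝ => s ^ (p.1 : ℂ) * conj (s ^ (p.2 : ℂ)))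
      ((με.restrict (Icc 0 1)).prod (μσ.restrict (Icc 0 1))) :=
    (integrableOn_cpow_ofReal hs).mul_prod
      (conjCLE.toContinuousLinearMap.integrable_comp (integrableOn_cpow_ofReal hs))
  rw [Phi, Phi, ← integral_conj, ← integral_prod_mul]
  change 0 ≤ RCLike.im (K := ℂ) _
  rw [← integral_im hint]
  refine integral_prod_nonneg_of_antisymm hint.im (fun p => ?_) hT.restrict_prod_le ?_
  · simp only [Prod.fst_swap, Prod.snd_swap, RCLike.im_to_complex, mul_im, conj_re, conj_im]
    ring
  · rw [Measure.prod_restrict]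
    filter_upwards [ae_restrict_mem (measurableSet_Icc.prod measurableSet_Icc)] with p hp hlt
    exact im_cpow_mul_conj_cpow_nonneg him hlt.le (by linarith [hp.1.2, hp.2.1])

lemma mul_mem_slitPlane {w z : ℂ} (hw : w ∈ slitPlane) (hw_im : 0 ≤ w.im) (hz : 0 < z.re)
    (hz_im : z.im ≤ 0) : w * z ∈ slitPlane := by
  rw [mem_slitPlane_iff] at hw ⊢
  by_contra! h
  rw [mul_re, mul_im] at h
  rcases hw_im.lt_or_eq with hw_im_pos | hw_im_zero
  · have hwz : w.re * z.im < 0 := by nlinarith [mul_pos hw_im_pos hz]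
    have hw_re : 0 < w.re := by
      by_contra! hw_re
      linarith [mul_nonneg_of_nonpos_of_nonpos hw_re hz_im]
    nlinarith [mul_pos hw_re hz, mul_nonneg hw_im (neg_nonneg.2 hz_im)]
  · have hw_re : 0 < w.re := hw.resolve_right (not_not.2 hw_im_zero.symm)
    nlinarith [mul_pos hw_re hz]

lemma sq_mem_slitPlane {s : ℂ} (hs : 0 < s.re) : s ^ 2 ∈ slitPlane := by
  rw [mem_slitPlane_iff, sq, mul_re, mul_im]
  rcases eq_or_ne s.im 0 with h | h
  · left
    rw [h, mul_zero, sub_zero]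
    exact mul_pos hs hs
  · right
    intro h'
    exact h ((mul_eq_zero.1 (by linarith : s.re * s.im = 0)).resolve_left hs.ne')

lemma conj_mem_slitPlane {z : ℂ} : conj z ∈ slitPlane ↔ z ∈ slitPlane := by
  simp [mem_slitPlane_iff]

section slitPlane

variable {μσ με : Measure ℝ} [IsFiniteMeasure μσ] [IsFiniteMeasure με] {s : ℂ}

lemma sq_mul_Phi_div_Phi_mem_slitPlane_of_im_nonneg (hσ : μσ ≠ 0) (hε : με ≠ 0)
    (hσsupp : μσ (Icc (0 : ℝ) 1)ᶜ = 0) (hεsupp : με (Icc (0 : ℝ) 1)ᶜ = 0)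
    (hT : TDrestriction μσ με) (hs : 0 < s.re) (him : 0 ≤ s.im) :
    s ^ 2 * Phi μσ s / Phi με s ∈ slitPlane := by
  have hs0 : s ≠ 0 := by rintro rfl; simp at hs
  have hσre := re_Phi_pos hσ hσsupp hs
  have hεre := re_Phi_pos hε hεsupp hs
  have hσim := im_Phi_nonneg (μ := μσ) hs0 him
  have hεim := im_Phi_nonneg (μ := με) hs0 him
  have hK := im_Phi_mul_conj_Phi_nonneg hT hs0 him
  simp only [mul_im, conj_re, conj_im] at hK
  have hN : 0 < normSq (Phi με s) := normSq_pos.2 fun h => by simp [h] at hεre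
  rw [mul_div_assoc]
  refine mul_mem_slitPlane (sq_mem_slitPlane hs) ?_ ?_ ?_
  · rw [sq, mul_im]
    nlinarith
  · rw [div_re]
    have := mul_nonneg hσim hεim
    positivity
  · rw [div_im, ← sub_div]
    exact div_nonpos_of_nonpos_of_nonneg (by linarith) hN.le

lemma sq_mul_Phi_div_Phi_mem_slitPlane (hσ : μσ ≠ 0) (hε : με ≠ 0)
    (hσsupp : μσ (Icc (0 : ℝ) 1)ᶜ = 0) (hεsupp : με (Icc (0 : ℝ) 1)ᶜ = 0)
    (hT : TDrestriction μσ με) (hs : 0 < s.re) :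
    s ^ 2 * Phi μσ s / Phi με s ∈ slitPlane := by
  rcases le_or_gt 0 s.im with him | him
  · exact sq_mul_Phi_div_Phi_mem_slitPlane_of_im_nonneg hσ hε hσsupp hεsupp hT hs him
  · have harg : s.arg ≠ Real.pi := slitPlane_arg_ne_pi (mem_slitPlane_iff.2 (Or.inl hs))
    have h := sq_mul_Phi_div_Phi_mem_slitPlane_of_im_nonneg hσ hε hσsupp hεsupp hT
      (s := conj s) (by simpa using hs) (by simpa using him.le)
    rwa [Phi_conj harg, Phi_conj harg, ← map_pow, ← map_mul, ← map_div₀,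
      conj_mem_slitPlane] at h

end slitPlane

theorem stmt_6 (μσ με : Measure ℝ) [IsFiniteMeasure μσ] [IsFiniteMeasure με]
    (hσ : μσ ≠ 0) (hε : με ≠ 0)
    (hσsupp : μσ (Set.Icc (0:ℝ) 1)ᶜ = 0) (hεsupp : με (Set.Icc (0:ℝ) 1)ᶜ = 0)
    (hT : TDrestriction μσ με) :
    ∀ s : ℂ, 0 < s.re →
      Phi μσ s ≠ 0
      ∧ Phi με s ≠ 0
      ∧ (s ^ 2 * Phi μσ s / Phi με s) ∉ {z : ℂ | z.im = 0 ∧ z.re ≤ 0}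
      ∧ ∀ ξ : ℝ, s ^ 2 + (ξ : ℂ) ^ 2 * Phi με s / Phi μσ s ≠ 0 := by
  intro s hs
  have hσ0 : Phi μσ s ≠ 0 := fun h => (re_Phi_pos hσ hσsupp hs).ne' (by simp [h])
  have hε0 : Phi με s ≠ 0 := fun h => (re_Phi_pos hε hεsupp hs).ne' (by simp [h])
  have hslit := sq_mul_Phi_div_Phi_mem_slitPlane hσ hε hσsupp hεsupp hT hs
  refine ⟨hσ0, hε0, fun h => mem_slitPlane_iff_not_le_zero.1 hslit (le_def.2 ⟨h.2, h.1⟩),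
    fun ξ hξ => ?_⟩
  have hξ' : s ^ 2 * Phi μσ s / Phi με s = -((ξ ^ 2 : ℝ) : ℂ) := by
    field_simp at hξ ⊢
    push_cast
    linear_combination hξ
  rw [hξ', neg_ofReal_mem_slitPlane] at hslit
  exact (sq_nonneg ξ).not_gt hslit
end

section
/- Let μ_σ and μ_ε be nonzero positive finite Borel measures on [0,1]. Then there exist C > 0 and r₀ ∈ (0,1] such that for all R with 0 < R ≤ r₀ and all θ ∈ [−π,π]: Φ_ε(R·e^{iθ}) ≠ 0 and |Φ_σ(R·e^{iθ})/Φ_ε(R·e^{iθ})| ≤ C/R. (In particular |√(Φ_σ(s)/Φ_ε(s))| ≲ |s|^{−1/2} and |s·√(Φ_σ(s)/Φ_ε(s))| → 0 as s → 0.) -/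
/-!
Let `β` be the essential infimum of `μ_ε`. Rotating `Φ_ε(R e^{iθ})` by `e^{-iβθ}` turns its real
part into `∫ R^α cos((α - β)θ) dμ_ε(α)`. For `α ≤ t := min (β + 1/4) 1` the phase is at most `π/4`,
so the cosine is at least `1/2` and these `α` contribute at least `R^t μ_ε(-∞, t] / 2 ≥ c R`; up to
`β + 1/2` the cosine stays nonnegative, and beyond it `R^α ≤ R^{β + 1/2} = o(R^t)`. Thus
`|Φ_ε(R e^{iθ})| ≥ c R` for small `R`, while `|Φ_σ| ≤ μ_σ[0, 1]` because `R^α ≤ 1`.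
-/
open MeasureTheory Complex Set

/-- `PhiP μ R θ = ∫₀¹ R^α e^{iαθ} dμ(α)` (polar form, including boundary values θ = ±π). -/
noncomputable def PhiP (μ : Measure ℝ) (R θ : ℝ) : ℂ :=
  ∫ α in Set.Icc (0:ℝ) 1, ((R ^ α : ℝ) : ℂ) * Complex.exp ((α * θ : ℝ) * Complex.I) ∂μ

-- `PhiP μ R θ` is definitionally `∫ α in Icc 0 1, phiKernel R θ α ∂μ`.
noncomputable def phiKernel (R θ α : ℝ) : ℂ := ((R ^ α : ℝ) : ℂ) * exp ((α * θ : ℝ) * I)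

lemma norm_phiKernel {R : ℝ} (hR : 0 ≤ R) (θ α : ℝ) : ‖phiKernel R θ α‖ = R ^ α := by
  rw [phiKernel, norm_mul, norm_exp_ofReal_mul_I, mul_one, norm_real, Real.norm_eq_abs,
    abs_of_nonneg (Real.rpow_nonneg hR α)]

lemma re_exp_mul_phiKernel (R θ β α : ℝ) :
    (exp ((-(β * θ) : ℝ) * I) * phiKernel R θ α).re = R ^ α * Real.cos ((α - β) * θ) := by
  rw [phiKernel, mul_left_comm, ← exp_add, ← add_mul, ← ofReal_add, re_ofReal_mul,
    exp_ofReal_mul_I_re]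
  ring_nf

lemma continuous_phiKernel {R : ℝ} (hR : 0 < R) (θ : ℝ) : Continuous (phiKernel R θ) := by
  unfold phiKernel
  fun_prop (disch := positivity)

lemma norm_PhiP_le {μ : Measure ℝ} (hμ : μ (Icc 0 1) < ⊤) {R : ℝ} (hR0 : 0 ≤ R) (hR1 : R ≤ 1)
    (θ : ℝ) : ‖PhiP μ R θ‖ ≤ μ.real (Icc 0 1) := by
  refine (norm_setIntegral_le_of_norm_le_const hμ fun α hα => ?_).trans_eq (one_mul _)
  exact (norm_phiKernel hR0 θ α).trans_le (Real.rpow_le_one hR0 hR1 hα.1)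

lemma exists_ae_le_and_measure_Iic_ne_zero {ν : Measure ℝ} (hν : ν ≠ 0) {a b : ℝ}
    (hab : ∀ᵐ α ∂ν, α ∈ Icc a b) : ∃ β, (∀ᵐ α ∂ν, β ≤ α) ∧ ∀ t > β, ν (Iic t) ≠ 0 := by
  have := ae_neBot.2 hν
  refine ⟨essInf id ν,
    ae_essInf_le (Filter.isBoundedUnder_of_eventually_ge (hab.mono fun _ h => h.1)),
    fun t ht hνt => ht.not_ge (le_essInf_of_ae_le t ?_
      (Filter.isCoboundedUnder_ge_of_eventually_le _ (hab.mono fun _ h => h.2)))⟩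
  filter_upwards [measure_eq_zero_iff_ae_notMem.1 hνt] with α hα
  exact (not_le.1 hα).le

open Real in
lemma indicator_sub_le_rpow_mul_cos {R θ β t α : ℝ} (hR0 : 0 < R) (hR1 : R ≤ 1) (hθ : |θ| ≤ π)
    (ht : t ≤ β + 1 / 4) (hα : β ≤ α) :
    (Iic t).indicator (fun _ => R ^ t / 2) α - R ^ (β + 1 / 2)
      ≤ R ^ α * Real.cos ((α - β) * θ) := by
  have hphase : |(α - β) * θ| ≤ (α - β) * π := by
    rw [abs_mul, abs_of_nonneg (sub_nonneg.2 hα)]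
    exact mul_le_mul_of_nonneg_left hθ (sub_nonneg.2 hα)
  have hRα := rpow_pos_of_pos hR0 α
  have hRβ := rpow_pos_of_pos hR0 (β + 1 / 2)
  by_cases hαt : α ∈ Iic t
  · have hαβ : α - β ≤ 1 / 4 := by linarith [mem_Iic.1 hαt]
    have hcos : 1 / 2 ≤ Real.cos ((α - β) * θ) := by
      have h1 : |(α - β) * θ| ≤ 1 := hphase.trans (by nlinarith [pi_lt_four])
      have h2 : ((α - β) * θ) ^ 2 ≤ 1 := by
        rw [← sq_abs]; nlinarith [abs_nonneg ((α - β) * θ)]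
      linarith [Real.one_sub_sq_div_two_le_cos (x := (α - β) * θ)]
    have hRt : R ^ t ≤ R ^ α := rpow_le_rpow_of_exponent_ge hR0 hR1 hαt
    rw [indicator_of_mem hαt]
    nlinarith
  · rw [indicator_of_notMem hαt, zero_sub]
    by_cases hαβ : α ≤ β + 1 / 2
    · have hcos : 0 ≤ Real.cos ((α - β) * θ) :=
        cos_nonneg_of_mem_Icc (abs_le.1 (hphase.trans (by nlinarith [pi_pos])))
      nlinarith
    · have hRα' : R ^ α ≤ R ^ (β + 1 / 2) :=
        rpow_le_rpow_of_exponent_ge hR0 hR1 (le_of_not_ge hαβ)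
      nlinarith [Real.neg_one_le_cos ((α - β) * θ)]

lemma re_exp_mul_integral_phiKernel {ν : Measure ℝ} {R θ β : ℝ}
    (hint : Integrable (phiKernel R θ) ν) :
    (exp ((-(β * θ) : ℝ) * I) * ∫ α, phiKernel R θ α ∂ν).re
      = ∫ α, R ^ α * Real.cos ((α - β) * θ) ∂ν := by
  rw [← integral_const_mul, ← RCLike.re_to_complex, ← integral_re (hint.const_mul _)]
  simp only [RCLike.re_to_complex, re_exp_mul_phiKernel]

section Integrals

variable {ν : Measure ℝ} [IsFiniteMeasure ν] {R θ β : ℝ}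

lemma integrable_phiKernel (hR0 : 0 < R) (hR1 : R ≤ 1) (hβ : ∀ᵐ α ∂ν, β ≤ α) :
    Integrable (phiKernel R θ) ν := by
  refine .of_bound (continuous_phiKernel hR0 θ).aestronglyMeasurable (R ^ β) ?_
  filter_upwards [hβ] with α hα
  rw [norm_phiKernel hR0.le]
  exact Real.rpow_le_rpow_of_exponent_ge hR0 hR1 hα

open Real in
lemma sub_le_integral_rpow_mul_cos {t : ℝ} (hR0 : 0 < R) (hR1 : R ≤ 1) (hθ : |θ| ≤ π)
    (ht : t ≤ β + 1 / 4) (hβ : ∀ᵐ α ∂ν, β ≤ α) :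
    R ^ t / 2 * ν.real (Iic t) - R ^ (β + 1 / 2) * ν.real univ
      ≤ ∫ α, R ^ α * Real.cos ((α - β) * θ) ∂ν := by
  have hint : Integrable (fun α => R ^ α * Real.cos ((α - β) * θ)) ν := by
    refine .of_bound (by fun_prop (disch := positivity) : Continuous _).aestronglyMeasurable
      (R ^ β) ?_
    filter_upwards [hβ] with α hα
    rw [norm_mul, Real.norm_of_nonneg (rpow_nonneg hR0.le α)]
    calc R ^ α * ‖Real.cos ((α - β) * θ)‖ ≤ R ^ α * 1 :=
          mul_le_mul_of_nonneg_left (Real.abs_cos_le_one _) (rpow_nonneg hR0.le α)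
      _ ≤ R ^ β := by rw [mul_one]; exact rpow_le_rpow_of_exponent_ge hR0 hR1 hα
  calc R ^ t / 2 * ν.real (Iic t) - R ^ (β + 1 / 2) * ν.real univ
      = ∫ α, ((Iic t).indicator (fun _ => R ^ t / 2) α - R ^ (β + 1 / 2)) ∂ν := by
        rw [integral_sub ((integrable_const _).indicator measurableSet_Iic) (integrable_const _),
          integral_indicator_const _ measurableSet_Iic, integral_const, smul_eq_mul,
          smul_eq_mul]
        ring
    _ ≤ _ := integral_mono_ae (((integrable_const _).indicator measurableSet_Iic).sub
        (integrable_const _)) hint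
        (hβ.mono fun α hα => indicator_sub_le_rpow_mul_cos hR0 hR1 hθ ht hα)

end Integrals

open Real in
lemma exists_mul_le_norm_integral_phiKernel {ν : Measure ℝ} [IsFiniteMeasure ν] (hν : ν ≠ 0)
    (h01 : ∀ᵐ α ∂ν, α ∈ Icc (0 : ℝ) 1) :
    ∃ c > 0, ∃ r₀ : ℝ, 0 < r₀ ∧ r₀ ≤ 1 ∧ ∀ R : ℝ, 0 < R → R ≤ r₀ → ∀ θ : ℝ, |θ| ≤ π →
      c * R ≤ ‖∫ α, phiKernel R θ α ∂ν‖ := by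
  obtain ⟨β, hβ, hνβ⟩ := exists_ae_le_and_measure_Iic_ne_zero hν h01
  have hν1 : ν (Iic 1) ≠ 0 := by
    rwa [measure_congr (ae_eq_univ.2 (measure_eq_zero_iff_ae_notMem (s := (Iic 1)ᶜ) |>.2
      (h01.mono fun _ h h' => h' h.2))), Ne, Measure.measure_univ_eq_zero]
  obtain ⟨t, htβ, ht1, hνt⟩ : ∃ t, t ≤ β + 1 / 4 ∧ t ≤ 1 ∧ ν (Iic t) ≠ 0 := by
    rcases lt_or_ge β (3 / 4) with h | h
    · exact ⟨β + 1 / 4, le_rfl, by linarith, hνβ _ (by linarith)⟩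
    · exact ⟨1, by linarith, le_rfl, hν1⟩
  set m := ν.real (Iic t)
  set M := ν.real univ
  have hm : 0 < m := ENNReal.toReal_pos hνt (measure_ne_top _ _)
  have hM : 0 < M := hm.trans_le (measureReal_mono (subset_univ _))
  refine ⟨m / 4, by positivity, min 1 ((m / (4 * M)) ^ 4), by positivity, min_le_left _ _,
    fun R hR0 hRr θ hθ => ?_⟩
  have hR1 : R ≤ 1 := hRr.trans (min_le_left _ _)
  have hRM : R ^ (4⁻¹ : ℝ) * M ≤ m / 4 := by
    have : R ^ (4⁻¹ : ℝ) ≤ m / (4 * M) := by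
      rw [rpow_inv_le_iff_of_pos hR0.le (by positivity) (by norm_num)]
      exact_mod_cast hRr.trans (min_le_right _ _)
    calc R ^ (4⁻¹ : ℝ) * M ≤ m / (4 * M) * M := by gcongr
      _ = m / 4 := by field_simp
  have hRt : R ≤ R ^ t := by simpa using rpow_le_rpow_of_exponent_ge hR0 hR1 ht1
  have hgap : R ^ (β + 1 / 2) ≤ R ^ t * R ^ (4⁻¹ : ℝ) := by
    rw [← rpow_add hR0]
    exact rpow_le_rpow_of_exponent_ge hR0 hR1 (by linarith)
  calc m / 4 * R ≤ R ^ t / 2 * m - R ^ (β + 1 / 2) * M := by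
        have := rpow_pos_of_pos hR0 t
        nlinarith [mul_le_mul_of_nonneg_right hgap hM.le]
    _ ≤ ∫ α, R ^ α * Real.cos ((α - β) * θ) ∂ν :=
        sub_le_integral_rpow_mul_cos hR0 hR1 hθ htβ hβ
    _ = (exp ((-(β * θ) : ℝ) * I) * ∫ α, phiKernel R θ α ∂ν).re :=
        (re_exp_mul_integral_phiKernel (integrable_phiKernel hR0 hR1 hβ)).symm
    _ ≤ ‖∫ α, phiKernel R θ α ∂ν‖ := by
        rw [← one_mul ‖∫ α, phiKernel R θ α ∂ν‖, ← norm_exp_ofReal_mul_I (-(β * θ)),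
          ← norm_mul]
        exact re_le_norm _

theorem stmt_12_general (μσ με : Measure ℝ) [IsFiniteMeasure μσ] [IsFiniteMeasure με]
    (hε : με ≠ 0) (hεsupp : με (Set.Icc (0:ℝ) 1)ᶜ = 0) :
    ∃ C > 0, ∃ r₀ : ℝ, 0 < r₀ ∧ r₀ ≤ 1 ∧
      ∀ R : ℝ, 0 < R → R ≤ r₀ → ∀ θ ∈ Set.Icc (-Real.pi) Real.pi,
        PhiP με R θ ≠ 0 ∧ ‖PhiP μσ R θ / PhiP με R θ‖ ≤ C / R := by
  have hε01 : με.restrict (Icc 0 1) ≠ 0 := by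
    rwa [Measure.restrict_eq_self_of_ae_mem (s := Icc 0 1) hεsupp]
  obtain ⟨c, hc, r₀, hr₀, hr₀1, hlow⟩ :=
    exists_mul_le_norm_integral_phiKernel hε01 (ae_restrict_mem measurableSet_Icc)
  refine ⟨(μσ.real (Icc 0 1) + 1) / c, by positivity, r₀, hr₀, hr₀1, fun R hR0 hRr θ hθ => ?_⟩
  have hR1 : R ≤ 1 := hRr.trans hr₀1
  have hε_low : c * R ≤ ‖PhiP με R θ‖ := hlow R hR0 hRr θ (abs_le.2 hθ)
  have hε_pos : 0 < ‖PhiP με R θ‖ := (mul_pos hc hR0).trans_le hε_low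
  refine ⟨norm_pos_iff.1 hε_pos, ?_⟩
  rw [norm_div, div_le_iff₀ hε_pos]
  calc ‖PhiP μσ R θ‖ ≤ μσ.real (Icc 0 1) := norm_PhiP_le (measure_lt_top _ _) hR0.le hR1 θ
    _ ≤ (μσ.real (Icc 0 1) + 1) / c / R * (c * R) := by
        rw [div_div, div_mul_cancel₀ _ (mul_pos hc hR0).ne']; linarith
    _ ≤ (μσ.real (Icc 0 1) + 1) / c / R * ‖PhiP με R θ‖ := by gcongr

theorem stmt_12 (μσ με : Measure ℝ) [IsFiniteMeasure μσ] [IsFiniteMeasure με]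
    (hσ : μσ ≠ 0) (hε : με ≠ 0)
    (hσsupp : μσ (Set.Icc (0:ℝ) 1)ᶜ = 0) (hεsupp : με (Set.Icc (0:ℝ) 1)ᶜ = 0) :
    ∃ C > 0, ∃ r₀ : ℝ, 0 < r₀ ∧ r₀ ≤ 1 ∧
      ∀ R : ℝ, 0 < R → R ≤ r₀ → ∀ θ ∈ Set.Icc (-Real.pi) Real.pi,
        PhiP με R θ ≠ 0 ∧ ‖PhiP μσ R θ / PhiP με R θ‖ ≤ C / R :=
  stmt_12_general μσ με hε hεsupp
end
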